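/- Let I = (0, τ) be an interval with τ > 0, and let v be a polynomial of degree at most p on I. Then the squared value of v at the endpoint satisfies v(0)² ≤ (p+1)² τ⁻¹ ∫_I v(t)² dt. -/

import Mathlib

open MeasureTheory intervalIntegral

namespace EndpointTrace
open Polynomial

/-- The integral functional on `(0,1)`. -/
noncomputable def L (q : ℝ[X]) : ℝ := ∫ t in (0:ℝ)..1, q.eval t

lemma intInt (q : ℝ[X]) (a b : ℝ) : IntervalIntegrable (fun t => q.eval t) volume a b :=
  q.continuous_aeval.intervalIntegrable _ _

lemma L_zero : L 0 = 0 := by simp [L]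

lemma L_add (q r : ℝ[X]) : L (q + r) = L q + L r := by
  simp only [L, eval_add]
  exact integral_add (intInt q 0 1) (intInt r 0 1)

lemma L_smul (a : ℝ) (q : ℝ[X]) : L (C a * q) = a * L q := by
  simp only [L, eval_mul, eval_C]
  exact integral_const_mul a _

lemma L_deriv (q : ℝ[X]) : L (derivative q) = q.eval 1 - q.eval 0 := by
  simp only [L]
  exact integral_eq_sub_of_hasDerivAt (fun x _ => q.hasDerivAt x) (intInt _ 0 1)

lemma L_parts (f g : ℝ[X]) :
    L (derivative f * g) =
      f.eval 1 * g.eval 1 - f.eval 0 * g.eval 0 - L (f * derivative g) := by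
  have h : derivative f * g + f * derivative g = derivative (f * g) := by
    rw [derivative_mul]
  have h2 : L (derivative f * g) + L (f * derivative g) = L (derivative (f * g)) := by
    rw [← L_add, h]
  rw [L_deriv] at h2
  simp only [eval_mul] at h2
  linarith

lemma L_sq_nonneg (q : ℝ[X]) : 0 ≤ L (q * q) := by
  simp only [L, eval_mul]
  apply intervalIntegral.integral_nonneg (by norm_num)
  intro x _; exact mul_self_nonneg _

/-- Divisibility of iterated derivatives. -/
lemma dvd_iterate_derivative (q f : ℝ[X]) (n k : ℕ) (h : q ^ n ∣ f) :
    q ^ (n - k) ∣ derivative^[k] f := by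
  induction k with
  | zero => simpa using h
  | succ k ih =>
    obtain ⟨r, hr⟩ := ih
    rw [Function.iterate_succ_apply', hr]
    rcases le_or_gt (n - k) 0 with h0 | h0
    · rw [Nat.le_zero] at h0
      have : n - (k+1) = 0 := by omega
      simp [this]
    · have hnk : n - k = (n - (k+1)) + 1 := by omega
      rw [hnk, derivative_mul, derivative_pow]
      simp only [Nat.add_sub_cancel]
      exact dvd_add ⟨C ((n - (k+1) : ℕ) + 1 : ℝ) * derivative q * r, by push_cast; ring⟩
        ⟨q * derivative r, by ring⟩

lemma L_iterate_parts (n : ℕ) (f : ℝ[X])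
    (h0 : ∀ k < n, (derivative^[k] f).eval 0 = 0)
    (h1 : ∀ k < n, (derivative^[k] f).eval 1 = 0) (g : ℝ[X]) :
    L (derivative^[n] f * g) = (-1)^n * L (f * derivative^[n] g) := by
  induction n generalizing g with
  | zero => simp
  | succ n ih =>
    have step : L (derivative^[n+1] f * g)
        = - L (derivative^[n] f * derivative g) := by
      rw [Function.iterate_succ_apply']
      rw [L_parts (derivative^[n] f) g, h0 n (by omega), h1 n (by omega)]
      ring
    rw [step, ih (fun k hk => h0 k (by omega)) (fun k hk => h1 k (by omega)) (derivative g),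
      ← Function.iterate_succ_apply]
    ring

/-- The Rodrigues-type recursion for the kernel. -/
noncomputable def R (p : ℕ) : ℕ → ℝ[X]
  | 0 => (X - 1) ^ p
  | (k+1) => X * derivative (R p k) + C ((p:ℝ) + 1 - k) * R p k

lemma R_zero (p : ℕ) : R p 0 = (X - 1) ^ p := rfl

lemma R_succ (p k : ℕ) :
    R p (k+1) = X * derivative (R p k) + C ((p:ℝ) + 1 - k) * R p k := rfl

lemma R_key (p : ℕ) : ∀ k ≤ p,
    X ^ (p + 1 - k) * R p k = derivative^[k] (X ^ (p+1) * (X - 1) ^ p) := by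
  intro k hk
  induction k with
  | zero => simp [R_zero]
  | succ k ih =>
    have hk' : k ≤ p := by omega
    rw [Function.iterate_succ_apply', ← ih hk']
    rw [derivative_mul, derivative_X_pow]
    have hc : ((p + 1 - k : ℕ) : ℝ) = (p:ℝ) + 1 - k := by
      push_cast [Nat.cast_sub (by omega : k ≤ p + 1)]; ring
    have e1 : p + 1 - k - 1 = p - k := by omega
    have e2 : p + 1 - (k + 1) = p - k := by omega
    have e3 : p + 1 - k = p - k + 1 := by omega
    rw [hc, e1, e2, e3, pow_succ, R_succ]
    ring

lemma R_natDegree_le (p : ℕ) : ∀ k, (R p k).natDegree ≤ p := by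
  intro k
  induction k with
  | zero =>
    rw [R_zero]
    have h1 : ((X:ℝ[X]) - 1).natDegree = 1 := by
      simpa using natDegree_X_sub_C (1:ℝ)
    calc ((X - 1 : ℝ[X]) ^ p).natDegree ≤ p * ((X:ℝ[X]) - 1).natDegree := natDegree_pow_le
      _ = p := by rw [h1, mul_one]
  | succ k ih =>
    rw [R_succ]
    apply natDegree_add_le_of_degree_le
    · rcases Nat.eq_zero_or_pos (R p k).natDegree with h0 | h0
      · obtain ⟨c, hc⟩ := natDegree_eq_zero.mp h0
        rw [← hc]; simp
      · have := natDegree_derivative_lt (p := R p k) (by omega)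
        calc (X * derivative (R p k)).natDegree ≤ 1 + (derivative (R p k)).natDegree :=
              natDegree_mul_le.trans (by simp)
          _ ≤ p := by omega
    · exact (natDegree_C_mul_le _ _).trans ih

lemma R_eval_one (p : ℕ) : ∀ k < p, (R p k).eval 1 = 0 := by
  intro k hk
  have h := R_key p k (le_of_lt hk)
  have h1 : ((X:ℝ[X]) ^ (p + 1 - k) * R p k).eval 1 = (R p k).eval 1 := by simp
  rw [h] at h1
  have hdvd : ((X:ℝ[X]) - 1) ^ (p - k) ∣ derivative^[k] ((X:ℝ[X]) ^ (p+1) * (X - 1) ^ p) :=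
    dvd_iterate_derivative _ _ p k (Dvd.intro_left _ rfl)
  obtain ⟨r, hr⟩ := hdvd
  rw [hr] at h1
  have hpk : p - k = (p - k - 1) + 1 := by omega
  rw [hpk] at h1
  simp only [eval_mul, eval_pow, eval_sub, eval_one, eval_X] at h1
  simpa using h1.symm

lemma R_eval_zero (p : ℕ) : ∀ k ≤ p,
    (R p k).eval 0 = (-1:ℝ)^p * ((p+1).factorial : ℝ) / (((p + 1 - k).factorial : ℕ) : ℝ) := by
  intro k hk
  induction k with
  | zero =>
    have hne : (((p+1).factorial : ℕ) : ℝ) ≠ 0 := by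
      exact_mod_cast (p+1).factorial_ne_zero
    simp only [R_zero, Nat.sub_zero]
    rw [mul_div_assoc, div_self hne, mul_one]
    simp
  | succ k ih =>
    have hk' : k ≤ p := by omega
    have hh : p + 1 - k = (p + 1 - (k+1)) + 1 := by omega
    have hne : (((p + 1 - (k+1)).factorial : ℕ) : ℝ) ≠ 0 := by
      exact_mod_cast Nat.factorial_ne_zero _
    have hcast : ((p + 1 - k : ℕ) : ℝ) = (p:ℝ) + 1 - k := by
      push_cast [Nat.cast_sub (by omega : k ≤ p + 1)]; ring
    have hc0 : (p:ℝ) + 1 - k ≠ 0 := by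
      rw [← hcast]
      exact_mod_cast Nat.pos_iff_ne_zero.mp (by omega)
    have hfac : (((p + 1 - k).factorial : ℕ) : ℝ)
        = ((p:ℝ) + 1 - k) * (((p + 1 - (k+1)).factorial : ℕ) : ℝ) := by
      rw [← hcast, hh, Nat.factorial_succ]
      push_cast
      ring
    rw [R_succ, eval_add, eval_mul, eval_mul, eval_X, eval_C, zero_mul, zero_add,
      ih hk', hfac]
    field_simp

lemma F_eval_zero (p : ℕ) : ∀ k < p,
    (derivative^[k] ((X:ℝ[X]) ^ (p+1) * (X - 1) ^ p)).eval 0 = 0 := by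
  intro k hk
  obtain ⟨r, hr⟩ := dvd_iterate_derivative X ((X:ℝ[X]) ^ (p+1) * (X - 1) ^ p) (p+1) k
    ⟨(X - 1) ^ p, rfl⟩
  rw [hr]
  have h : p + 1 - k = (p - k) + 1 := by omega
  rw [h, pow_succ]
  simp

lemma F_eval_one (p : ℕ) : ∀ k < p,
    (derivative^[k] ((X:ℝ[X]) ^ (p+1) * (X - 1) ^ p)).eval 1 = 0 := by
  intro k hk
  obtain ⟨r, hr⟩ := dvd_iterate_derivative ((X:ℝ[X]) - 1) ((X:ℝ[X]) ^ (p+1) * (X - 1) ^ p)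
    p k (Dvd.intro_left _ rfl)
  rw [hr]
  have h : p - k = (p - k - 1) + 1 := by omega
  rw [h, pow_succ]
  simp

lemma L_R (p : ℕ) : ∀ k ≤ p,
    L (R p k) = ((p.factorial : ℕ) : ℝ) / (((p - k).factorial : ℕ) : ℝ) * ((-1:ℝ)^p / ((p:ℝ) + 1)) := by
  intro k hk
  induction k with
  | zero =>
    have hfne : ((p.factorial : ℕ) : ℝ) ≠ 0 := by exact_mod_cast p.factorial_ne_zero
    have hd : derivative (((X:ℝ[X]) - 1) ^ (p+1)) = C ((p:ℝ) + 1) * (X - 1) ^ p := by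
      rw [derivative_pow]
      push_cast
      simp
    have h1 : L (C ((p:ℝ) + 1) * (X - 1) ^ p) = (-1:ℝ)^p := by
      rw [← hd, L_deriv]
      simp [← neg_one_pow_eq_pow_mod_two, pow_succ]
    rw [L_smul] at h1
    have hp1 : ((p:ℝ) + 1) ≠ 0 := by positivity
    rw [R_zero, Nat.sub_zero]
    rw [div_self hfne, one_mul]
    field_simp at h1 ⊢
    linarith [h1]
  | succ k ih =>
    have hk' : k ≤ p := by omega
    have hone : (R p k).eval 1 = 0 := R_eval_one p k (by omega)
    -- L (X * derivative (R p k)) = - L (R p k)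
    have hXd : X * derivative (R p k) + R p k = derivative (X * R p k) := by
      rw [derivative_mul, derivative_X]
      ring
    have h2 : L (X * derivative (R p k)) + L (R p k) = (R p k).eval 1 := by
      rw [← L_add, hXd, L_deriv]
      simp
    rw [hone] at h2
    have h3 : L (R p (k+1)) = ((p:ℝ) - k) * L (R p k) := by
      rw [R_succ, L_add, L_smul]
      linarith [h2]
    rw [h3, ih hk']
    have hfac : (((p - k).factorial : ℕ) : ℝ)
        = ((p:ℝ) - k) * (((p - (k+1)).factorial : ℕ) : ℝ) := by
      have hh : p - k = (p - (k+1)) + 1 := by omega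
      have hcast : ((p - k : ℕ) : ℝ) = (p:ℝ) - k := by
        push_cast [Nat.cast_sub (by omega : k ≤ p)]; ring
      rw [← hcast, hh, Nat.factorial_succ]
      push_cast
      ring
    have hne : (((p - (k+1)).factorial : ℕ) : ℝ) ≠ 0 := by
      exact_mod_cast Nat.factorial_ne_zero _
    have hc0 : (p:ℝ) - k ≠ 0 := by
      have hcast : ((p - k : ℕ) : ℝ) = (p:ℝ) - k := by
        push_cast [Nat.cast_sub (by omega : k ≤ p)]; ring
      rw [← hcast]
      exact_mod_cast Nat.pos_iff_ne_zero.mp (by omega)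
    rw [hfac]
    field_simp

/-- Reproducing property of the kernel `R p p`. -/
lemma L_repro (p : ℕ) (v : ℝ[X]) (hdeg : v.natDegree ≤ p) :
    L (R p p * v) = L (R p p) * v.eval 0 := by
  set v0 := v.eval 0 with hv0
  have hXdvd : X ∣ (v - C v0) := by
    rw [X_dvd_iff, coeff_zero_eq_eval_zero]
    simp [hv0]
  obtain ⟨q, hq⟩ := hXdvd
  have hv : v = C v0 + X * q := by rw [← hq]; ring
  rcases eq_or_ne q 0 with hq0 | hq0
  · rw [hv, hq0, mul_zero, add_zero, mul_comm, L_smul]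
    simp [mul_comm]
  · -- natDegree q < p
    have hdq : q.natDegree < p := by
      have h1 : (X * q).natDegree = 1 + q.natDegree := by
        rw [natDegree_mul X_ne_zero hq0, natDegree_X]
      have h2 : (v - C v0).natDegree ≤ p := by
        apply natDegree_sub_le _ _ |>.trans
        simp [hdeg]
      rw [hq, h1] at h2
      omega
    have hDq : derivative^[p] q = 0 := iterate_derivative_eq_zero hdq
    have hsplit : R p p * v = C v0 * R p p + (X * R p p) * q := by
      rw [hv]; ring
    have hXR : X * R p p = derivative^[p] ((X:ℝ[X]) ^ (p+1) * (X - 1) ^ p) := by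
      have := R_key p p le_rfl
      rwa [Nat.add_sub_cancel_left, pow_one] at this
    rw [hsplit, L_add, L_smul, hXR,
      L_iterate_parts p _ (F_eval_zero p) (F_eval_one p) q, hDq]
    simp [mul_comm, L_zero]

/-- The sharp endpoint estimate on the unit interval. -/
theorem unit_estimate (p : ℕ) (v : ℝ[X]) (hdeg : v.natDegree ≤ p) :
    (v.eval 0)^2 ≤ ((p:ℝ) + 1)^2 * L (v * v) := by
  set K := R p p with hK
  set c := L K with hc
  set s := ((p:ℝ) + 1)^2 with hs
  have hs0 : 0 < s := by positivity
  have hcval : c = ((p.factorial : ℕ) : ℝ) / 1 * ((-1:ℝ)^p / ((p:ℝ) + 1)) := by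
    have := L_R p p le_rfl
    simpa using this
  have hc0 : c ≠ 0 := by
    rw [hcval]
    have h1 : ((p.factorial : ℕ) : ℝ) ≠ 0 := by exact_mod_cast p.factorial_ne_zero
    have h2 : ((p:ℝ) + 1) ≠ 0 := by positivity
    have h3 : ((-1:ℝ)^p) ≠ 0 := by
      simp [pow_ne_zero]
    field_simp
    exact div_ne_zero (mul_ne_zero h1 h3) h2
  have hK0 : K.eval 0 = c * s := by
    have hz := R_eval_zero p p le_rfl
    rw [Nat.add_sub_cancel_left] at hz
    rw [hK, hz, hcval, hs]
    have : ((p+1).factorial : ℝ) = ((p:ℝ) + 1) * ((p.factorial : ℕ) : ℝ) := by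
      rw [Nat.factorial_succ]; push_cast; ring
    rw [this]
    have h2 : ((p:ℝ) + 1) ≠ 0 := by positivity
    field_simp
    ring
  set v0 := v.eval 0 with hv0
  set lam := v0 / (c * s) with hlam
  -- expansion of the square
  have expand : (C lam * K - v) * (C lam * K - v)
      = C (lam*lam) * (K*K) + (C (-lam) * (K*v) + (C (-lam) * (K*v) + v*v)) := by
    rw [map_mul, map_neg]
    ring
  have hnn : 0 ≤ L ((C lam * K - v) * (C lam * K - v)) := L_sq_nonneg _
  rw [expand, L_add, L_add, L_add, L_smul, L_smul] at hnn
  have hKK : L (K * K) = c * (c * s) := by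
    rw [L_repro p K (R_natDegree_le p p), ← hc, hK0]
  have hKv : L (K * v) = c * v0 := by
    rw [L_repro p v hdeg, ← hc, ← hv0]
  rw [hKK, hKv] at hnn
  have key : lam*lam * (c * (c * s)) + (-lam * (c * v0) + (-lam * (c * v0) + L (v*v)))
      = L (v*v) - v0^2 / s := by
    rw [hlam]
    field_simp
    ring
  rw [key] at hnn
  have := (div_le_iff₀ hs0).mp (by linarith : v0^2 / s ≤ L (v*v))
  linarith [this]

end EndpointTrace

/-- One-dimensional endpoint (trace) inverse estimate for polynomials:
for `v` a polynomial of degree at most `p` on `I = (0, τ)`,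
`v(0)² ≤ (p+1)² τ⁻¹ ∫_I v² dt`. -/
theorem endpoint_inverse_estimate (p : ℕ) (τ : ℝ) (hτ : 0 < τ)
    (v : Polynomial ℝ) (hdeg : v.natDegree ≤ p) :
    (v.eval 0) ^ 2 ≤ ((p : ℝ) + 1) ^ 2 * τ⁻¹ * ∫ t in (0:ℝ)..τ, (v.eval t) ^ 2 := by
  set u := v.comp (Polynomial.C τ * Polynomial.X) with hu
  have hueval : ∀ s : ℝ, u.eval s = v.eval (τ * s) := by
    intro s; simp [hu, Polynomial.eval_comp]
  have hu0 : u.eval 0 = v.eval 0 := by simp [hueval]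
  have hudeg : u.natDegree ≤ p := by
    rw [hu, Polynomial.natDegree_comp, Polynomial.natDegree_C_mul_X _ hτ.ne', mul_one]
    exact hdeg
  have h := EndpointTrace.unit_estimate p u hudeg
  have hLuu : EndpointTrace.L (u * u) = τ⁻¹ * ∫ t in (0:ℝ)..τ, (v.eval t) ^ 2 := by
    rw [EndpointTrace.L]
    rw [intervalIntegral.integral_congr
      (g := fun t => (fun x => (v.eval x)^2) (τ * t))
      (fun t _ => by simp [Polynomial.eval_mul, hueval, sq])]
    rw [intervalIntegral.integral_comp_mul_left (fun x => (v.eval x)^2) hτ.ne']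
    simp
  rw [hu0, hLuu] at h
  rw [mul_assoc]
  exact h
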